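/- Let E be a finite directed graph without sinks and let u ∈ U_E be a unitary belonging to F_E^k for some k ≥ 1. Then the following conditions are equivalent: (1) λ_u is a *-automorphism of C*(E) whose inverse equals λ_w for some unitary w ∈ U_E belonging to F_E^l for some l ≥ 1 (λ_u is invertible with localized inverse); (2) the sequence (Ad(u_m*)(u*))_{m≥1} = (u_m* u* u_m)_{m≥1} is eventually constant; (3) the ring A_u is nilpotent; (4) Ξ_u ⊆ D_E^0. -/

import Mathlib

/-- A finite directed graph. -/
structure FinDirGraph where
  V : Type
  E : Type
  [instFV : Fintype V]
  [instFE : Fintype E]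
  [instDV : DecidableEq V]
  [instDE : DecidableEq E]
  r : E → V
  s : E → V

attribute [instance] FinDirGraph.instFV FinDirGraph.instFE FinDirGraph.instDV FinDirGraph.instDE

namespace FinDirGraph

variable (G : FinDirGraph)

/-- `G.IsPathFrom v l` : the list of edges `l` forms a path starting at vertex `v`. -/
def IsPathFrom : G.V → List G.E → Prop
  | _, [] => True
  | v, e :: l => G.s e = v ∧ IsPathFrom (G.r e) l

/-- The terminal vertex of a list of edges starting at `v`. -/
def rangeFrom : G.V → List G.E → G.V
  | v, [] => v
  | _, e :: l => rangeFrom (G.r e) l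

/-- A finite path in the graph `G`; vertices are the paths of length `0`. -/
structure Path where
  src : G.V
  edges : List G.E
  ok : G.IsPathFrom src edges

variable {G}

/-- The length of a path. -/
def Path.len (μ : G.Path) : ℕ := μ.edges.length

/-- The range (terminal vertex) of a path. -/
def Path.rng (μ : G.Path) : G.V := G.rangeFrom μ.src μ.edges

variable (G)

/-- `G` has no sinks: every vertex emits at least one edge. -/
def NoSinks : Prop := ∀ v : G.V, ∃ e : G.E, G.s e = v

/-- `G` has no sources: every vertex receives at least one edge. -/
def NoSources : Prop := ∀ v : G.V, ∃ e : G.E, G.r e = v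

/-- Every loop in `G` has an exit. -/
def EveryLoopHasExit : Prop :=
  ∀ μ : G.Path, μ.edges ≠ [] → μ.src = μ.rng →
    ∃ e ∈ μ.edges, ∃ f g : G.E, f ≠ g ∧ G.s f = G.s e ∧ G.s g = G.s e

variable (A : Type) [CStarAlgebra A] [PartialOrder A] [StarOrderedRing A]

/-- A Cuntz–Krieger `G`-family in a unital C*-algebra `A`. -/
structure CKFamily where
  P : G.V → A
  S : G.E → A
  proj_idem : ∀ v, P v * P v = P v
  proj_sa : ∀ v, star (P v) = P v
  orth : ∀ v w, v ≠ w → P v * P w = 0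
  ck1 : ∀ e, star (S e) * S e = P (G.r e)
  ck1' : ∀ e f, e ≠ f → star (S e) * S f = 0
  ck2 : ∀ e, S e * star (S e) ≤ P (G.s e)
  ck3 : ∀ v : G.V, (∃ e, G.s e = v) →
    P v = ∑ e ∈ Finset.univ.filter (fun e => G.s e = v), S e * star (S e)

variable {G A}

/-- The partial isometry `S_μ` associated to a finite path, defined from the source. -/
def CKFamily.sFrom (F : CKFamily G A) : G.V → List G.E → A
  | v, [] => F.P v
  | _, e :: l => F.S e * F.sFrom (G.r e) l

/-- `S_μ` for a path `μ`. -/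
def CKFamily.sPath (F : CKFamily G A) (μ : G.Path) : A := F.sFrom μ.src μ.edges

/-- `P_μ = S_μ S_μ*` for a path `μ`. -/
def CKFamily.pPath (F : CKFamily G A) (μ : G.Path) : A :=
  F.sPath μ * star (F.sPath μ)

variable (G A) in
/-- `A`, together with the Cuntz–Krieger family `F`, is the graph C*-algebra `C*(G)`:
the family sums to one, generates `A` as a closed *-subalgebra, and is universal. -/
structure IsGraphCStarAlgebra (F : CKFamily G A) : Prop where
  sum_one : ∑ v : G.V, F.P v = 1
  generates :
    (StarAlgebra.adjoin ℂ (Set.range F.P ∪ Set.range F.S)).topologicalClosure = ⊤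
  universal : ∀ (C : Type) [CStarAlgebra C] [PartialOrder C] [StarOrderedRing C]
    (F' : CKFamily G C), (∑ v : G.V, F'.P v) = 1 →
      ∃! φ : A →⋆ₐ[ℂ] C, (∀ v, φ (F.P v) = F'.P v) ∧ (∀ e, φ (F.S e) = F'.S e)

/-- The diagonal subalgebra `D_E`: the closed *-subalgebra generated by the `P_μ`. -/
def CKFamily.DE (F : CKFamily G A) : StarSubalgebra ℂ A :=
  (StarAlgebra.adjoin ℂ {a : A | ∃ μ : G.Path, a = F.pPath μ}).topologicalClosure

/-- `D_E^k`: the linear span of the `P_μ`, `μ ∈ E^k`. -/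
noncomputable def CKFamily.DEk (F : CKFamily G A) (k : ℕ) : Submodule ℂ A :=
  Submodule.span ℂ {a : A | ∃ μ : G.Path, μ.len = k ∧ a = F.pPath μ}

/-- The core AF-subalgebra `F_E`: closed linear span of words `S_μ S_ν*` with `|μ| = |ν|`. -/
def CKFamily.FE (F : CKFamily G A) : Set A :=
  closure ((Submodule.span ℂ
    {a : A | ∃ μ ν : G.Path, μ.len = ν.len ∧ a = F.sPath μ * star (F.sPath ν)}
      : Submodule ℂ A) : Set A)

/-- `F_E^k`: the linear span of words `S_μ S_ν*` with `|μ| = |ν| = k`. -/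
noncomputable def CKFamily.FEk (F : CKFamily G A) (k : ℕ) : Submodule ℂ A :=
  Submodule.span ℂ
    {a : A | ∃ μ ν : G.Path, μ.len = k ∧ ν.len = k ∧ a = F.sPath μ * star (F.sPath ν)}

/-- `u ∈ U_E` : `u` is a unitary commuting with all vertex projections. -/
def CKFamily.IsUE (F : CKFamily G A) (u : A) : Prop :=
  u ∈ unitary A ∧ ∀ v, u * F.P v = F.P v * u

/-- `lam = λ_u` : the endomorphism determined by the unitary `u ∈ U_E`. -/
def CKFamily.IsLambdaU (F : CKFamily G A) (u : A) (lam : A →⋆ₐ[ℂ] A) : Prop :=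
  (∀ e, lam (F.S e) = u * F.S e) ∧ (∀ v, lam (F.P v) = F.P v)

/-- The shift `φ(x) = Σ_e S_e x S_e*`. -/
def CKFamily.shift (F : CKFamily G A) (x : A) : A :=
  ∑ e : G.E, F.S e * x * star (F.S e)

/-- `u_k = u φ(u) ⋯ φ^{k-1}(u)` (with `u_0 = 1`). -/
def CKFamily.ukProd (F : CKFamily G A) (u : A) : ℕ → A
  | 0 => 1
  | m + 1 => F.ukProd u m * F.shift^[m] u

/-- An element is a finite sum of words `S_α S_β*`. -/
def CKFamily.IsSumOfWords (F : CKFamily G A) (a : A) : Prop :=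
  ∃ (n : ℕ) (μ ν : Fin n → G.Path),
    a = ∑ i, F.sPath (μ i) * star (F.sPath (ν i))

/-- The group `S_E` of unitaries of the form `Σ S_α S_β*`. -/
def CKFamily.SE (F : CKFamily G A) : Set A :=
  {a : A | a ∈ unitary A ∧ F.IsSumOfWords a}

/-- The group `P_E^k` of unitaries of the form `Σ S_α S_β*`, `|α| = |β| = k`. -/
def CKFamily.PEk (F : CKFamily G A) (k : ℕ) : Set A :=
  {a : A | a ∈ unitary A ∧ ∃ (n : ℕ) (μ ν : Fin n → G.Path),
    (∀ i, (μ i).len = k ∧ (ν i).len = k) ∧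
    a = ∑ i, F.sPath (μ i) * star (F.sPath (ν i))}

/-- `P_E = ∪_k P_E^k`. -/
def CKFamily.PE (F : CKFamily G A) : Set A := ⋃ k : ℕ, F.PEk k

/-- `γ_z` on generators: `γ (S e) = z • S e`, `γ (P v) = P v`. -/
def CKFamily.IsGaugeHom (F : CKFamily G A) (z : ℂ) (ρ : A →⋆ₐ[ℂ] A) : Prop :=
  (∀ e, ρ (F.S e) = z • F.S e) ∧ (∀ v, ρ (F.P v) = F.P v)

/-- `γ_z` as an automorphism, on generators. -/
def CKFamily.IsGaugeAut (F : CKFamily G A) (z : ℂ) (γ : A ≃⋆ₐ[ℂ] A) : Prop :=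
  (∀ e, γ (F.S e) = z • F.S e) ∧ (∀ v, γ (F.P v) = F.P v)

/-- The automorphism `α` of `C*(E)` is induced by an automorphism of the graph `E`. -/
def CKFamily.IsGraphInduced (F : CKFamily G A) (α : A ≃⋆ₐ[ℂ] A) : Prop :=
  ∃ (φV : G.V ≃ G.V) (φE : G.E ≃ G.E),
    (∀ e, G.s (φE e) = φV (G.s e)) ∧ (∀ e, G.r (φE e) = φV (G.r e)) ∧
    (∀ e, α (F.S e) = F.S (φE e)) ∧ (∀ v, α (F.P v) = F.P (φV v))

/-- Membership in the subgroup `𝔊_E` of `Aut (C*(E))` generated by the graph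
automorphisms `Γ_E` together with the automorphisms `λ_u`, `u ∈ S_E ∩ U_E`. -/
inductive CKFamily.InGG (F : CKFamily G A) : (A ≃⋆ₐ[ℂ] A) → Prop
  | gamma (α : A ≃⋆ₐ[ℂ] A) : F.IsGraphInduced α → F.InGG α
  | lam (α : A ≃⋆ₐ[ℂ] A) (u : A) : u ∈ F.SE → F.IsUE u →
      (∀ e, α (F.S e) = u * F.S e) → (∀ v, α (F.P v) = F.P v) → F.InGG α
  | one : F.InGG (StarAlgEquiv.refl ℂ A)
  | mul (α β : A ≃⋆ₐ[ℂ] A) : F.InGG α → F.InGG β → F.InGG (α.trans β)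
  | inv (α : A ≃⋆ₐ[ℂ] A) : F.InGG α → F.InGG α.symm

/-- Membership in the subgroup `𝔊ℜ_E` of `Aut (C*(E))` generated by the graph
automorphisms `Γ_E` together with the automorphisms `λ_u`, `u ∈ P_E ∩ U_E`. -/
inductive CKFamily.InGGR (F : CKFamily G A) : (A ≃⋆ₐ[ℂ] A) → Prop
  | gamma (α : A ≃⋆ₐ[ℂ] A) : F.IsGraphInduced α → F.InGGR α
  | lam (α : A ≃⋆ₐ[ℂ] A) (u : A) : u ∈ F.PE → F.IsUE u →
      (∀ e, α (F.S e) = u * F.S e) → (∀ v, α (F.P v) = F.P v) → F.InGGR α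
  | one : F.InGGR (StarAlgEquiv.refl ℂ A)
  | mul (α β : A ≃⋆ₐ[ℂ] A) : F.InGGR α → F.InGGR β → F.InGGR (α.trans β)
  | inv (α : A ≃⋆ₐ[ℂ] A) : F.InGGR α → F.InGGR α.symm


/-- The map `a^u_{e,f}(x) = S_e* u* x u S_f`. -/
def CKFamily.amap (F : CKFamily G A) (u : A) (e f : G.E) (x : A) : A :=
  star (F.S e) * (star u * x * u) * F.S f

/-- Composition of the maps `a^u_{e,f}` along a list of pairs of edges. -/
def CKFamily.acomp (F : CKFamily G A) (u : A) : List (G.E × G.E) → A → A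
  | [], x => x
  | p :: t, x => F.amap u p.1 p.2 (F.acomp u t x)

/-- The spaces `Ξ_r`: `Ξ_0 = F_E^{k-1}`, `Ξ_r = λ_u(H)* Ξ_{r-1} λ_u(H)`. -/
noncomputable def CKFamily.Xi (F : CKFamily G A) (u : A) (k : ℕ) : ℕ → Submodule ℂ A
  | 0 => F.FEk (k - 1)
  | r + 1 => Submodule.span ℂ
      {a : A | ∃ x ∈ F.Xi u k r, ∃ e f : G.E, a = star (u * F.S e) * x * (u * F.S f)}

/-- The spaces `Ξ_r^D`: `Ξ_0^D = D_E^{k-1}`, `Ξ_r^D = λ_u(H)* Ξ_{r-1}^D λ_u(H)`. -/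
noncomputable def CKFamily.XiD (F : CKFamily G A) (u : A) (k : ℕ) : ℕ → Submodule ℂ A
  | 0 => F.DEk (k - 1)
  | r + 1 => Submodule.span ℂ
      {a : A | ∃ x ∈ F.XiD u k r, ∃ e f : G.E, a = star (u * F.S e) * x * (u * F.S f)}

end FinDirGraph

/-!
On `F_E^m` the endomorphism `λ_u` acts as `Ad u_m`, so compressing by `S_e`, `S_f` turns
`u_(m+1)* x u_(m+1)` into `u_m* a^u_{e,f}(x) u_m`; compressions `S_e* · S_f` map `F_E^n`
into `F_E^(n-1)`.

(1 ⇒ 4) Since `λ_w(λ_u(S_e)) = S_e`, `λ_w` maps `Ξ_r` into `F_E^(l+k-r)`, hence `Ξ_u` into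
`F_E^0 ⊆ D_E^0`; as `λ_u` fixes `D_E^0`, `Ξ_u = λ_u λ_w (Ξ_u) ⊆ D_E^0`.

(4 ⇒ 3) The `Ξ_r` decrease inside the finite-dimensional `F_E^(k-1)`, so they stabilise at
`Ξ_u`, and words of length `r` in the `a^u_{e,f}` map `F_E^(k-1)` into `Ξ_r`.

(3 ⇒ 2) Expanding `x = Σ S_α (S_α* x S_β) S_β*` over paths of length `m` gives
`φ^m(u)* x φ^m(u) = Σ S_α u* (S_α* x S_β) u S_β*`. For `x = u_m* u* u_m` and `m > l` the
compressions `S_α* x S_β` are words of length `m` in the `a^u_{e,f}` applied to `u*`, so they lie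
in `D_E^0`, which commutes with `u`; hence `u_(m+1)* u* u_(m+1) = φ^m(u)* x φ^m(u) = x`.

(2 ⇒ 1) The eventual value `w` satisfies `λ_u(w) = u*`, so `λ_u λ_w = id`. Then `z = λ_w(u) w`
satisfies `λ_w λ_u = λ_z` and `λ_u(z) = 1`, so `λ_z(z) = 1`, and `z = 1` because `λ_z` is
`Ad z_m` on `F_E^m`.
-/

theorem Submodule.antitone_stabilizes_of_le {K V : Type*} [DivisionRing K] [AddCommGroup V]
    [Module K V] {N : Submodule K V} [FiniteDimensional K N] {X : ℕ → Submodule K V}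
    (hX : Antitone X) (hN : X 0 ≤ N) : ∃ r, ∀ m, r ≤ m → X m = X r := by
  obtain ⟨r, hr⟩ := IsArtinian.monotone_stabilizes
    ⟨fun r => OrderDual.toDual ((X r).comap N.subtype), fun _ _ h => Submodule.comap_mono (hX h)⟩
  refine ⟨r, fun m hm => ?_⟩
  have h : (X r).comap N.subtype = (X m).comap N.subtype := hr m hm
  have hle : ∀ n, X n ≤ N := fun n => (hX (Nat.zero_le n)).trans hN
  rw [← inf_of_le_right (hle m), ← inf_of_le_right (hle r), ← Submodule.map_comap_subtype,
    ← Submodule.map_comap_subtype, h]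

namespace FinDirGraph

variable {G : FinDirGraph}

@[simp] theorem rangeFrom_nil (v : G.V) : G.rangeFrom v [] = v := rfl

@[simp] theorem rangeFrom_cons (v : G.V) (e : G.E) (l : List G.E) :
    G.rangeFrom v (e :: l) = G.rangeFrom (G.r e) l := rfl

theorem isPathFrom_concat {v : G.V} {l : List G.E} {f : G.E} :
    G.IsPathFrom v (l ++ [f]) ↔ G.IsPathFrom v l ∧ G.s f = G.rangeFrom v l := by
  induction l generalizing v with
  | nil => simp [IsPathFrom]
  | cons e l ih => simp only [List.cons_append, IsPathFrom, ih, rangeFrom_cons, and_assoc]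

namespace CKFamily

variable {A : Type} [CStarAlgebra A] [PartialOrder A] (F : CKFamily G A)

theorem P_mul_P (v w : G.V) : F.P v * F.P w = if v = w then F.P v else 0 := by
  split_ifs with h
  · rw [h, F.proj_idem]
  · exact F.orth v w h

theorem star_S_mul_S (e f : G.E) :
    star (F.S e) * F.S f = if e = f then F.P (G.r e) else 0 := by
  split_ifs with h
  · rw [h, F.ck1]
  · exact F.ck1' e f h

theorem S_mul_P_r (e : G.E) : F.S e * F.P (G.r e) = F.S e := by
  have hSS : ∀ x : A, star (F.S e) * (F.S e * x) = F.P (G.r e) * x := fun x => by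
    rw [← mul_assoc, F.ck1]
  have h : star (F.S e * F.P (G.r e) - F.S e) * (F.S e * F.P (G.r e) - F.S e) = 0 := by
    simp only [star_sub, star_mul, F.proj_sa, sub_mul, mul_sub, mul_assoc, hSS]
    simp only [← mul_assoc, F.proj_idem]
    rw [mul_assoc, F.ck1, F.proj_idem, sub_self]
  exact sub_eq_zero.mp ((CStarRing.star_mul_self_eq_zero_iff _).mp h)

theorem P_s_mul_S (e : G.E) : F.P (G.s e) * F.S e = F.S e := by
  rw [F.ck3 (G.s e) ⟨e, rfl⟩, Finset.sum_mul, Finset.sum_eq_single_of_mem e (by simp)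
    fun f _ hfe => by rw [mul_assoc, F.ck1' f e hfe, mul_zero], mul_assoc, F.ck1, S_mul_P_r]

theorem P_mul_S (v : G.V) (e : G.E) : F.P v * F.S e = if v = G.s e then F.S e else 0 := by
  split_ifs with h
  · rw [h, P_s_mul_S]
  · rw [← P_s_mul_S F e, ← mul_assoc, F.orth v (G.s e) h, zero_mul]

theorem shift_one_of_noSinks (h1 : ∑ v, F.P v = 1) (hns : G.NoSinks) : F.shift 1 = 1 := by
  simp only [shift, mul_one]
  rw [← h1, ← Finset.sum_fiberwise_of_maps_to (g := G.s) (t := Finset.univ)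
    (fun e _ => Finset.mem_univ _)]
  exact Finset.sum_congr rfl fun v _ => (F.ck3 v (hns v)).symm

theorem eq_of_forall_mul_S_eq (hφ : F.shift 1 = 1) {x y : A}
    (h : ∀ e, x * F.S e = y * F.S e) : x = y := by
  rw [← mul_one x, ← mul_one y, ← hφ]
  simp only [shift, mul_one, Finset.mul_sum, ← mul_assoc, h]

@[simp] theorem sFrom_nil (v : G.V) : F.sFrom v [] = F.P v := rfl

@[simp] theorem sFrom_cons (v : G.V) (e : G.E) (l : List G.E) :
    F.sFrom v (e :: l) = F.S e * F.sFrom (G.r e) l := rfl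

theorem sFrom_mul_P_rangeFrom (v : G.V) (l : List G.E) :
    F.sFrom v l * F.P (G.rangeFrom v l) = F.sFrom v l := by
  induction l generalizing v with
  | nil => exact F.proj_idem v
  | cons e l ih => rw [sFrom_cons, rangeFrom_cons, mul_assoc, ih]

theorem sFrom_mul_P (v w : G.V) (l : List G.E) :
    F.sFrom v l * F.P w = if w = G.rangeFrom v l then F.sFrom v l else 0 := by
  split_ifs with h
  · rw [h, sFrom_mul_P_rangeFrom]
  · rw [← sFrom_mul_P_rangeFrom, mul_assoc, F.orth _ _ (Ne.symm h), mul_zero]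

theorem P_mul_sFrom {v : G.V} {l : List G.E} (h : G.IsPathFrom v l) :
    F.P v * F.sFrom v l = F.sFrom v l := by
  cases l with
  | nil => exact F.proj_idem v
  | cons e l => rw [sFrom_cons, ← mul_assoc, ← h.1, P_s_mul_S]

theorem S_mul_sFrom (e : G.E) {v : G.V} {l : List G.E} (h : G.IsPathFrom v l) :
    F.S e * F.sFrom v l = if G.r e = v then F.sFrom (G.s e) (e :: l) else 0 := by
  split_ifs with hr
  · rw [sFrom_cons, hr]
  · rw [← P_mul_sFrom F h, ← mul_assoc, ← S_mul_P_r, mul_assoc (F.S e), F.orth _ _ hr,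
      mul_zero, zero_mul]

theorem star_S_mul_sFrom (e a : G.E) {v : G.V} {l : List G.E} (h : G.IsPathFrom v (a :: l)) :
    star (F.S e) * F.sFrom v (a :: l) = if e = a then F.sFrom (G.r e) l else 0 := by
  rw [sFrom_cons, ← mul_assoc, star_S_mul_S]
  split_ifs with hea
  · rw [hea, P_mul_sFrom F h.2]
  · rw [zero_mul]

theorem star_sFrom_mul_sFrom {v₁ v₂ : G.V} {l₁ l₂ : List G.E} (h₁ : G.IsPathFrom v₁ l₁)
    (h₂ : G.IsPathFrom v₂ l₂) (hl : l₁.length = l₂.length) :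
    star (F.sFrom v₁ l₁) * F.sFrom v₂ l₂ =
      if v₁ = v₂ ∧ l₁ = l₂ then F.P (G.rangeFrom v₁ l₁) else 0 := by
  induction l₁ generalizing v₁ v₂ l₂ with
  | nil =>
    rw [List.length_nil, eq_comm, List.length_eq_zero_iff] at hl
    subst hl
    simp only [sFrom_nil, F.proj_sa, P_mul_P, rangeFrom_nil, and_true]
  | cons e l₁ ih =>
    obtain ⟨f, l₂, rfl⟩ := List.exists_cons_of_length_eq_add_one hl.symm
    rw [sFrom_cons, star_mul, mul_assoc, star_S_mul_sFrom F e f h₂]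
    by_cases hef : e = f
    · subst hef
      have hv : v₁ = v₂ := h₁.1.symm.trans h₂.1
      simp only [if_true, ih h₁.2 h₂.2 (by simpa using hl), hv, true_and, List.cons.injEq,
        rangeFrom_cons]
    · simp [hef]

theorem sFrom_concat {v : G.V} {l : List G.E} {f : G.E} (h : G.IsPathFrom v (l ++ [f])) :
    F.sFrom v (l ++ [f]) = F.sFrom v l * F.S f := by
  induction l generalizing v with
  | nil => rw [List.nil_append, sFrom_cons, sFrom_nil, S_mul_P_r, sFrom_nil, ← h.1, P_s_mul_S]
  | cons e l ih => rw [List.cons_append, sFrom_cons, ih h.2, sFrom_cons, mul_assoc]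

/-! ### The subspaces `F_E^n` and `D_E^0` -/

theorem sFrom_mul_star_sFrom_mem_FEk {v w : G.V} {l₁ l₂ : List G.E} {n : ℕ}
    (h₁ : G.IsPathFrom v l₁) (h₂ : G.IsPathFrom w l₂) (e₁ : l₁.length = n)
    (e₂ : l₂.length = n) : F.sFrom v l₁ * star (F.sFrom w l₂) ∈ F.FEk n :=
  Submodule.subset_span ⟨⟨v, l₁, h₁⟩, ⟨w, l₂, h₂⟩, e₁, e₂, rfl⟩

theorem FEk_le {n : ℕ} {N : Submodule ℂ A}
    (h : ∀ (v w : G.V) (l₁ l₂ : List G.E), G.IsPathFrom v l₁ → G.IsPathFrom w l₂ →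
      l₁.length = n → l₂.length = n → F.sFrom v l₁ * star (F.sFrom w l₂) ∈ N) :
    F.FEk n ≤ N := by
  rw [FEk, Submodule.span_le]
  rintro _ ⟨μ, ν, hμ, hν, rfl⟩
  exact h μ.src ν.src μ.edges ν.edges μ.ok ν.ok hμ hν

variable {F}

theorem star_mem_FEk {n : ℕ} {x : A} (hx : x ∈ F.FEk n) : star x ∈ F.FEk n := by
  have : F.FEk n ≤ (F.FEk n).comap (starLinearEquiv ℂ (A := A)).toLinearMap := by
    refine F.FEk_le fun v w l₁ l₂ h₁ h₂ e₁ e₂ => ?_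
    simpa using F.sFrom_mul_star_sFrom_mem_FEk h₂ h₁ e₂ e₁
  simpa using this hx

theorem mul_mem_FEk {n : ℕ} {x y : A} (hx : x ∈ F.FEk n) (hy : y ∈ F.FEk n) :
    x * y ∈ F.FEk n := by
  have : F.FEk n * F.FEk n ≤ F.FEk n := by
    rw [FEk, Submodule.span_mul_span, Submodule.span_le]
    rintro _ ⟨_, ⟨μ, ν, hμ, hν, rfl⟩, _, ⟨α, β, hα, hβ, rfl⟩, rfl⟩
    simp only [sPath, mul_assoc]
    rw [← mul_assoc (star _), F.star_sFrom_mul_sFrom ν.ok α.ok (hν.trans hα.symm)]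
    split_ifs
    · rw [← mul_assoc, sFrom_mul_P]
      split_ifs
      · exact F.sFrom_mul_star_sFrom_mem_FEk μ.ok β.ok hμ hβ
      · rw [zero_mul]; exact zero_mem _
    · rw [zero_mul, mul_zero]; exact zero_mem _
  exact this (Submodule.mul_mem_mul hx hy)

-- `S_μ S_ν* = Σ_{s f = r(μ)} S_{μ f} S_{ν f}*`, using that `r(μ)` is not a sink.
theorem FEk_le_succ (hns : G.NoSinks) (n : ℕ) : F.FEk n ≤ F.FEk (n + 1) := by
  refine F.FEk_le fun v w l₁ l₂ h₁ h₂ e₁ e₂ => ?_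
  by_cases hr : G.rangeFrom v l₁ = G.rangeFrom w l₂
  · rw [← F.sFrom_mul_P_rangeFrom v l₁, F.ck3 _ (hns _), Finset.mul_sum, Finset.sum_mul]
    refine Submodule.sum_mem _ fun f hf => ?_
    have hsf : G.s f = G.rangeFrom v l₁ := (Finset.mem_filter.mp hf).2
    have hp₁ : G.IsPathFrom v (l₁ ++ [f]) := isPathFrom_concat.mpr ⟨h₁, hsf⟩
    have hp₂ : G.IsPathFrom w (l₂ ++ [f]) := isPathFrom_concat.mpr ⟨h₂, hsf.trans hr⟩
    have hword : F.sFrom v l₁ * (F.S f * star (F.S f)) * star (F.sFrom w l₂) =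
        F.sFrom v (l₁ ++ [f]) * star (F.sFrom w (l₂ ++ [f])) := by
      rw [F.sFrom_concat hp₁, F.sFrom_concat hp₂, star_mul]
      simp only [mul_assoc]
    rw [hword]
    exact F.sFrom_mul_star_sFrom_mem_FEk hp₁ hp₂ (by simp [e₁]) (by simp [e₂])
  · rw [← F.sFrom_mul_P_rangeFrom v l₁, ← F.sFrom_mul_P_rangeFrom w l₂, star_mul, F.proj_sa,
      mul_assoc, ← mul_assoc (F.P _), F.orth _ _ hr, zero_mul, mul_zero]
    exact zero_mem _

theorem FEk_mono (hns : G.NoSinks) : Monotone F.FEk :=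
  monotone_nat_of_le_succ (FEk_le_succ hns)

theorem star_S_mul_mul_S_mem_FEk {n : ℕ} {x : A} (hx : x ∈ F.FEk (n + 1)) (e f : G.E) :
    star (F.S e) * x * F.S f ∈ F.FEk n := by
  have : F.FEk (n + 1) ≤
      (F.FEk n).comap (LinearMap.mulLeftRight ℂ (star (F.S e), F.S f)) := by
    refine F.FEk_le fun v w l₁ l₂ h₁ h₂ e₁ e₂ => ?_
    obtain ⟨a, l₁, rfl⟩ := List.exists_cons_of_length_eq_add_one e₁
    obtain ⟨b, l₂, rfl⟩ := List.exists_cons_of_length_eq_add_one e₂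
    have hstar : star (F.sFrom w (b :: l₂)) * F.S f
        = star (star (F.S f) * F.sFrom w (b :: l₂)) := by
      rw [star_mul, star_star]
    rw [Submodule.mem_comap, LinearMap.mulLeftRight_apply, ← mul_assoc, mul_assoc _ _ (F.S f),
      hstar, F.star_S_mul_sFrom e a h₁, F.star_S_mul_sFrom f b h₂]
    split_ifs with hea hfb
    · subst hea hfb
      exact F.sFrom_mul_star_sFrom_mem_FEk h₁.2 h₂.2 (by simpa using e₁) (by simpa using e₂)
    all_goals simp
  exact this hx

theorem star_S_mul_mul_S_mem_FEk_pred (hns : G.NoSinks) {n : ℕ} {x : A} (hx : x ∈ F.FEk n)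
    (e f : G.E) : star (F.S e) * x * F.S f ∈ F.FEk (n - 1) :=
  star_S_mul_mul_S_mem_FEk (FEk_mono hns (by omega) hx) e f

instance finiteDimensional_FEk (n : ℕ) : FiniteDimensional ℂ (F.FEk n) := by
  let words := (fun p : (G.V × List G.E) × (G.V × List G.E) =>
    F.sFrom p.1.1 p.1.2 * star (F.sFrom p.2.1 p.2.2)) ''
      ((Set.univ ×ˢ {l | l.length = n}) ×ˢ (Set.univ ×ˢ {l | l.length = n}))
  have hfin : words.Finite :=
    (((Set.finite_univ).prod (List.finite_length_eq G.E n)).prod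
      ((Set.finite_univ).prod (List.finite_length_eq G.E n))).image _
  have := FiniteDimensional.span_of_finite ℂ hfin
  refine Submodule.finiteDimensional_of_le (S₂ := Submodule.span ℂ words)
    (F.FEk_le fun v w l₁ l₂ _ _ e₁ e₂ => ?_)
  exact Submodule.subset_span ⟨((v, l₁), (w, l₂)), ⟨⟨trivial, e₁⟩, trivial, e₂⟩, rfl⟩

theorem pPath_of_len_eq_zero {μ : G.Path} (hμ : μ.len = 0) : F.pPath μ = F.P μ.src := by
  rw [pPath, sPath, List.length_eq_zero_iff.mp hμ, sFrom_nil, F.proj_sa, F.proj_idem]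

theorem P_mem_DEk_zero (v : G.V) : F.P v ∈ F.DEk 0 :=
  Submodule.subset_span
    ⟨⟨v, [], trivial⟩, rfl, (pPath_of_len_eq_zero (μ := ⟨v, [], trivial⟩) rfl).symm⟩

theorem DEk_zero_le {N : Submodule ℂ A} (h : ∀ v, F.P v ∈ N) : F.DEk 0 ≤ N := by
  rw [DEk, Submodule.span_le]
  rintro _ ⟨μ, hμ, rfl⟩
  rw [SetLike.mem_coe, pPath_of_len_eq_zero hμ]
  exact h μ.src

theorem FEk_zero_le_DEk_zero : F.FEk 0 ≤ F.DEk 0 := by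
  refine F.FEk_le fun v w l₁ l₂ _ _ e₁ e₂ => ?_
  rw [List.length_eq_zero_iff.mp e₁, List.length_eq_zero_iff.mp e₂, sFrom_nil, sFrom_nil,
    F.proj_sa, P_mul_P]
  split_ifs
  · exact P_mem_DEk_zero v
  · exact zero_mem _

theorem star_S_mul_mul_S_mem_DEk_zero {d : A} (hd : d ∈ F.DEk 0) (e f : G.E) :
    star (F.S e) * d * F.S f ∈ F.DEk 0 := by
  refine DEk_zero_le (N := (F.DEk 0).comap (LinearMap.mulLeftRight ℂ (star (F.S e), F.S f)))
    (fun v => ?_) hd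
  rw [Submodule.mem_comap, LinearMap.mulLeftRight_apply, ← F.proj_sa v, ← star_mul, P_mul_S]
  split_ifs
  · rw [star_S_mul_S]
    split_ifs
    · exact P_mem_DEk_zero _
    · exact zero_mem _
  · rw [star_zero, zero_mul]
    exact zero_mem _

/-! ### The shift and the unitaries `u_m` -/

variable (F) in
def CommutesWithP (x : A) : Prop := ∀ v, x * F.P v = F.P v * x

theorem CommutesWithP.star_mul_mul_of_mem_DEk_zero {u d : A} (hu : F.CommutesWithP u)
    (hu1 : star u * u = 1) (hd : d ∈ F.DEk 0) : star u * d * u = d := by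
  refine DEk_zero_le (N := LinearMap.eqLocus (LinearMap.mulLeftRight ℂ (star u, u))
    LinearMap.id) (fun v => ?_) hd
  rw [LinearMap.mem_eqLocus, LinearMap.mulLeftRight_apply, LinearMap.id_apply, mul_assoc,
    ← hu v, ← mul_assoc, hu1, one_mul]

theorem CommutesWithP.star {x : A} (hx : F.CommutesWithP x) : F.CommutesWithP (star x) :=
  fun v => by simpa only [star_mul, F.proj_sa] using (congrArg Star.star (hx v)).symm

theorem CommutesWithP.mul {x y : A} (hx : F.CommutesWithP x) (hy : F.CommutesWithP y) :
    F.CommutesWithP (x * y) :=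
  fun v => by rw [mul_assoc, hy v, ← mul_assoc, hx v, mul_assoc]

theorem commutesWithP_one : F.CommutesWithP (1 : A) := fun v => by rw [one_mul, mul_one]

theorem commutesWithP_shift (x : A) : F.CommutesWithP (F.shift x) := fun v => by
  simp only [shift, Finset.sum_mul, Finset.mul_sum, mul_assoc]
  refine Finset.sum_congr rfl fun e _ => ?_
  rw [← F.proj_sa v, ← star_mul, F.proj_sa, ← mul_assoc (F.P v), P_mul_S]
  split_ifs <;> simp

theorem CommutesWithP.shift_iter {x : A} (hx : F.CommutesWithP x) (n : ℕ) :
    F.CommutesWithP (F.shift^[n] x) := by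
  cases n with
  | zero => exact hx
  | succ n => rw [Function.iterate_succ_apply']; exact commutesWithP_shift _

theorem shift_mul_S {x : A} (hx : F.CommutesWithP x) (e : G.E) :
    F.shift x * F.S e = F.S e * x := by
  rw [shift, Finset.sum_mul, Finset.sum_eq_single e
    (fun f _ hfe => by rw [mul_assoc, F.ck1' f e hfe, mul_zero]) (by simp),
    mul_assoc, F.ck1, mul_assoc, hx, ← mul_assoc, S_mul_P_r]

theorem shift_star (x : A) : F.shift (star x) = star (F.shift x) := by
  simp only [shift, star_sum, star_mul, star_star, mul_assoc]

theorem star_S_mul_shift {x : A} (hx : F.CommutesWithP x) (e : G.E) :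
    star (F.S e) * F.shift x = x * star (F.S e) := by
  simpa only [star_mul, star_star, ← shift_star] using congrArg star (shift_mul_S hx.star e)

theorem shift_mul_shift (x : A) {y : A} (hy : F.CommutesWithP y) :
    F.shift x * F.shift y = F.shift (x * y) := by
  conv_lhs => rw [shift, Finset.sum_mul]
  refine Finset.sum_congr rfl fun e _ => ?_
  rw [mul_assoc, star_S_mul_shift hy, ← mul_assoc, mul_assoc (F.S e)]

theorem shift_iter_star (x : A) (n : ℕ) : F.shift^[n] (star x) = star (F.shift^[n] x) := by
  induction n with
  | zero => rfl
  | succ n ih => rw [Function.iterate_succ_apply', Function.iterate_succ_apply', ih, shift_star]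

theorem shift_iter_mul (x : A) {y : A} (hy : F.CommutesWithP y) (n : ℕ) :
    F.shift^[n] x * F.shift^[n] y = F.shift^[n] (x * y) := by
  induction n with
  | zero => rfl
  | succ n ih =>
    simp only [Function.iterate_succ_apply']
    rw [shift_mul_shift _ (hy.shift_iter n), ih]

theorem shift_iter_one (hφ : F.shift 1 = 1) (n : ℕ) : F.shift^[n] 1 = 1 :=
  Function.iterate_fixed hφ n

theorem shift_mem_FEk {x : A} {n : ℕ} (hx : x ∈ F.FEk n) : F.shift x ∈ F.FEk (n + 1) := by
  have : F.FEk n ≤ (F.FEk (n + 1)).comap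
      (∑ e, LinearMap.mulLeftRight ℂ (F.S e, star (F.S e))) := by
    refine F.FEk_le fun v w l₁ l₂ h₁ h₂ e₁ e₂ => ?_
    rw [Submodule.mem_comap, LinearMap.sum_apply]
    refine Submodule.sum_mem _ fun e _ => ?_
    rw [LinearMap.mulLeftRight_apply, ← mul_assoc, mul_assoc _ _ (star (F.S e)), ← star_mul,
      F.S_mul_sFrom e h₁, F.S_mul_sFrom e h₂]
    split_ifs with hv hw
    · exact F.sFrom_mul_star_sFrom_mem_FEk ⟨rfl, hv ▸ h₁⟩ ⟨rfl, hw ▸ h₂⟩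
        (by simp [e₁]) (by simp [e₂])
    all_goals simp
  simpa [LinearMap.sum_apply, shift] using this hx

theorem shift_iter_mem_FEk {x : A} {n : ℕ} (hx : x ∈ F.FEk n) (m : ℕ) :
    F.shift^[m] x ∈ F.FEk (n + m) := by
  induction m with
  | zero => exact hx
  | succ m ih => rw [Function.iterate_succ_apply', ← Nat.add_assoc]; exact shift_mem_FEk ih

theorem IsUE.commutesWithP {u : A} (hu : F.IsUE u) : F.CommutesWithP u := hu.2

theorem IsUE.mul {u w : A} (hu : F.IsUE u) (hw : F.IsUE w) : F.IsUE (u * w) :=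
  ⟨mul_mem hu.1 hw.1, CommutesWithP.mul hu.2 hw.2⟩

theorem IsUE.star {u : A} (hu : F.IsUE u) : F.IsUE (star u) :=
  ⟨Unitary.star_mem hu.1, CommutesWithP.star hu.2⟩

theorem IsUE.shift_iter (hφ : F.shift 1 = 1) {u : A} (hu : F.IsUE u) (n : ℕ) :
    F.IsUE (F.shift^[n] u) := by
  refine ⟨Unitary.mem_iff.mpr ⟨?_, ?_⟩, CommutesWithP.shift_iter hu.2 n⟩
  · rw [← shift_iter_star, shift_iter_mul _ hu.2, Unitary.star_mul_self_of_mem hu.1,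
      shift_iter_one hφ]
  · rw [← shift_iter_star, shift_iter_mul _ (CommutesWithP.star hu.2),
      Unitary.mul_star_self_of_mem hu.1, shift_iter_one hφ]

@[simp] theorem ukProd_zero (u : A) : F.ukProd u 0 = 1 := rfl

theorem ukProd_succ (u : A) (m : ℕ) : F.ukProd u (m + 1) = F.ukProd u m * F.shift^[m] u := rfl

theorem IsUE.ukProd (hφ : F.shift 1 = 1) {u : A} (hu : F.IsUE u) (m : ℕ) :
    F.IsUE (F.ukProd u m) := by
  induction m with
  | zero => exact ⟨one_mem _, fun v => by rw [ukProd_zero, one_mul, mul_one]⟩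
  | succ m ih => exact ih.mul (hu.shift_iter hφ m)

theorem ukProd_succ_mul_S {u : A} (hu : F.CommutesWithP u) (m : ℕ) (e : G.E) :
    F.ukProd u (m + 1) * F.S e = u * F.S e * F.ukProd u m := by
  induction m with
  | zero => simp [ukProd_succ]
  | succ m ih =>
    rw [ukProd_succ, mul_assoc, Function.iterate_succ_apply', shift_mul_S (hu.shift_iter m),
      ← mul_assoc, ih, mul_assoc, ← ukProd_succ]

theorem ukProd_succ_mem_FEk (hns : G.NoSinks) {u : A} {j : ℕ} (hu : u ∈ F.FEk j) (m : ℕ) :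
    F.ukProd u (m + 1) ∈ F.FEk (j + m) := by
  induction m with
  | zero => simpa [ukProd_succ] using hu
  | succ m ih =>
    exact mul_mem_FEk (FEk_mono hns (by omega) ih) (shift_iter_mem_FEk hu (m + 1))

theorem star_shift_mul_mul_shift (hφ : F.shift 1 = 1) {v : A} (hv : F.CommutesWithP v) (x : A) :
    star (F.shift v) * x * F.shift v =
      ∑ e, ∑ f, F.S e * (star v * (star (F.S e) * x * F.S f) * v) * star (F.S f) := by
  have hx : x = F.shift 1 * x * F.shift 1 := by rw [hφ, one_mul, mul_one]
  have h1 : F.shift 1 = ∑ e, F.S e * star (F.S e) := by simp only [shift, mul_one]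
  conv_lhs => rw [hx, h1]
  simp only [Finset.mul_sum, Finset.sum_mul]
  rw [Finset.sum_comm]
  refine Finset.sum_congr rfl fun e _ => Finset.sum_congr rfl fun f _ => ?_
  have hl : star (F.shift v) * F.S e = F.S e * star v := by
    rw [← shift_star, shift_mul_S hv.star]
  have hr : star (F.S f) * F.shift v = v * star (F.S f) := star_S_mul_shift hv f
  calc star (F.shift v) * (F.S e * star (F.S e) * x * (F.S f * star (F.S f))) * F.shift v
      = (star (F.shift v) * F.S e) * (star (F.S e) * x * F.S f) *
          (star (F.S f) * F.shift v) := by simp only [mul_assoc]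
    _ = _ := by rw [hl, hr]; simp only [mul_assoc]

theorem eq_sum_S_mul_mul_star_S (hφ : F.shift 1 = 1) (x : A) :
    x = ∑ e, ∑ f, F.S e * (star (F.S e) * x * F.S f) * star (F.S f) := by
  simpa [hφ] using F.star_shift_mul_mul_shift hφ commutesWithP_one x

/-! ### The endomorphisms `λ_u` -/

theorem IsLambdaU.apply_sFrom {u : A} {lam : A →⋆ₐ[ℂ] A} (hlam : F.IsLambdaU u lam)
    (hu : F.CommutesWithP u) (v : G.V) (l : List G.E) :
    lam (F.sFrom v l) = F.ukProd u l.length * F.sFrom v l := by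
  induction l generalizing v with
  | nil => rw [sFrom_nil, hlam.2, List.length_nil, ukProd_zero, one_mul]
  | cons e l ih =>
    rw [sFrom_cons, map_mul, hlam.1, ih, List.length_cons, ← mul_assoc, ← ukProd_succ_mul_S hu,
      mul_assoc]

theorem IsLambdaU.apply_of_mem_FEk {u : A} {lam : A →⋆ₐ[ℂ] A} (hlam : F.IsLambdaU u lam)
    (hu : F.CommutesWithP u) {m : ℕ} {x : A} (hx : x ∈ F.FEk m) :
    lam x = F.ukProd u m * x * star (F.ukProd u m) := by
  have : F.FEk m ≤ LinearMap.eqLocus lam.toAlgHom.toLinearMap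
      (LinearMap.mulLeftRight ℂ (F.ukProd u m, star (F.ukProd u m))) := by
    refine F.FEk_le fun v w l₁ l₂ _ _ e₁ e₂ => ?_
    rw [LinearMap.mem_eqLocus, AlgHom.toLinearMap_apply, StarAlgHom.coe_toAlgHom,
      LinearMap.mulLeftRight_apply, map_mul, map_star, hlam.apply_sFrom hu,
      hlam.apply_sFrom hu, e₁, e₂, star_mul]
    simp only [mul_assoc]
  simpa using this hx

theorem IsLambdaU.apply_of_mem_DEk_zero {u : A} {lam : A →⋆ₐ[ℂ] A} (hlam : F.IsLambdaU u lam)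
    {d : A} (hd : d ∈ F.DEk 0) : lam d = d := by
  have : F.DEk 0 ≤ LinearMap.eqLocus lam.toAlgHom.toLinearMap LinearMap.id :=
    DEk_zero_le fun v => by simp [hlam.2 v]
  simpa using this hd

theorem IsLambdaU.comp {u w : A} {lam lamw : A →⋆ₐ[ℂ] A} (hlamw : F.IsLambdaU w lamw)
    (hlam : F.IsLambdaU u lam) : F.IsLambdaU (lamw u * w) (lamw.comp lam) :=
  ⟨fun e => by rw [StarAlgHom.comp_apply, hlam.1, map_mul, hlamw.1, mul_assoc],
    fun v => by rw [StarAlgHom.comp_apply, hlam.2, hlamw.2]⟩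

theorem IsLambdaU.eq_one_of_apply_eq_one (hφ : F.shift 1 = 1) {z : A} {lam : A →⋆ₐ[ℂ] A}
    (hlam : F.IsLambdaU z lam) (hz : F.IsUE z) {m : ℕ} {x : A} (hx : x ∈ F.FEk m)
    (h : lam x = 1) : x = 1 := by
  set U := F.ukProd z m
  have hU : star U * U = 1 := Unitary.star_mul_self_of_mem (hz.ukProd hφ m).1
  rw [hlam.apply_of_mem_FEk hz.commutesWithP hx] at h
  calc x = star U * U * x * (star U * U) := by rw [hU, one_mul, mul_one]
    _ = star U * (U * x * star U) * U := by simp only [mul_assoc]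
    _ = 1 := by rw [h, mul_one, hU]

section Twist

variable [StarOrderedRing A]

def twist {u : A} (hu : F.IsUE u) : CKFamily G A where
  P := F.P
  S e := u * F.S e
  proj_idem := F.proj_idem
  proj_sa := F.proj_sa
  orth := F.orth
  ck1 e := by
    rw [star_mul, mul_assoc, ← mul_assoc (star u), Unitary.star_mul_self_of_mem hu.1, one_mul,
      F.ck1]
  ck1' e f hef := by
    rw [star_mul, mul_assoc, ← mul_assoc (star u), Unitary.star_mul_self_of_mem hu.1, one_mul,
      F.ck1' e f hef]
  ck2 e := by
    have h := star_right_conjugate_le_conjugate (F.ck2 e) u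
    have hl : u * (F.S e * star (F.S e)) * star u = u * F.S e * star (u * F.S e) := by
      rw [star_mul]; simp only [mul_assoc]
    have hr : u * F.P (G.s e) * star u = F.P (G.s e) := by
      rw [hu.2, mul_assoc, Unitary.mul_star_self_of_mem hu.1, mul_one]
    rwa [hl, hr] at h
  ck3 v hv := by
    have hconj : ∀ x : A, (u * x) * star (u * x) = u * (x * star x) * star u := fun x => by
      rw [star_mul]; simp only [mul_assoc]
    simp only [hconj, ← Finset.sum_mul, ← Finset.mul_sum, ← F.ck3 v hv]
    rw [hu.2, mul_assoc, Unitary.mul_star_self_of_mem hu.1, mul_one]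

end Twist

/-! ### The maps `a^u_{e,f}` and the spaces `Ξ_r` -/

theorem amap_eq (u : A) (e f : G.E) (x : A) :
    F.amap u e f x = star (u * F.S e) * x * (u * F.S f) := by
  rw [amap, star_mul]
  simp only [mul_assoc]

theorem amap_mem_FEk (hns : G.NoSinks) {u : A} {k : ℕ} (huk : u ∈ F.FEk k) {x : A}
    (hx : x ∈ F.FEk (k - 1)) (e f : G.E) : F.amap u e f x ∈ F.FEk (k - 1) :=
  star_S_mul_mul_S_mem_FEk_pred hns
    (mul_mem_FEk (mul_mem_FEk (star_mem_FEk huk) (FEk_mono hns (Nat.sub_le k 1) hx)) huk) e f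

theorem amap_mem_DEk_zero {u : A} (hu : F.IsUE u) {d : A} (hd : d ∈ F.DEk 0) (e f : G.E) :
    F.amap u e f d ∈ F.DEk 0 := by
  rw [amap, hu.commutesWithP.star_mul_mul_of_mem_DEk_zero (Unitary.star_mul_self_of_mem hu.1) hd]
  exact star_S_mul_mul_S_mem_DEk_zero hd e f

theorem acomp_append (u : A) (L₁ L₂ : List (G.E × G.E)) (x : A) :
    F.acomp u (L₁ ++ L₂) x = F.acomp u L₁ (F.acomp u L₂ x) := by
  induction L₁ with
  | nil => rfl
  | cons p L₁ ih => simp only [List.cons_append, acomp, ih]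

theorem acomp_mem_DEk_zero {u : A} (hu : F.IsUE u) {d : A} (hd : d ∈ F.DEk 0)
    (L : List (G.E × G.E)) : F.acomp u L d ∈ F.DEk 0 := by
  induction L with
  | nil => exact hd
  | cons p L ih => exact amap_mem_DEk_zero hu ih p.1 p.2

theorem acomp_mem_Xi {u : A} {k : ℕ} {x : A} (hx : x ∈ F.FEk (k - 1)) (L : List (G.E × G.E)) :
    F.acomp u L x ∈ F.Xi u k L.length := by
  induction L with
  | nil => exact hx
  | cons p L ih => exact Submodule.subset_span ⟨_, ih, p.1, p.2, amap_eq ..⟩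

theorem Xi_antitone (hns : G.NoSinks) {u : A} {k : ℕ} (huk : u ∈ F.FEk k) :
    Antitone (F.Xi u k) := by
  refine antitone_nat_of_succ_le fun r => ?_
  induction r with
  | zero =>
    refine Submodule.span_le.mpr ?_
    rintro _ ⟨x, hx, e, f, rfl⟩
    rw [← amap_eq]
    exact amap_mem_FEk hns huk hx e f
  | succ r ih => exact Submodule.span_mono fun _ ⟨x, hx, e, f, h⟩ => ⟨x, ih hx, e, f, h⟩

theorem Xi_stabilizes (hns : G.NoSinks) {u : A} {k : ℕ} (huk : u ∈ F.FEk k) :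
    ∃ r, ∀ m, r ≤ m → F.Xi u k m = F.Xi u k r :=
  Submodule.antitone_stabilizes_of_le (N := F.FEk (k - 1)) (Xi_antitone hns huk) le_rfl

variable (F) in
def DiagonalAtDepth : ℕ → A → Prop
  | 0, x => x ∈ F.DEk 0
  | n + 1, x => ∀ e f, DiagonalAtDepth n (star (F.S e) * x * F.S f)

theorem DiagonalAtDepth.star_shift_iter_mul_mul (hφ : F.shift 1 = 1) {u : A} (hu : F.IsUE u)
    {n : ℕ} {x : A} (hx : F.DiagonalAtDepth n x) :
    star (F.shift^[n] u) * x * F.shift^[n] u = x := by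
  induction n generalizing x with
  | zero =>
    exact hu.commutesWithP.star_mul_mul_of_mem_DEk_zero (Unitary.star_mul_self_of_mem hu.1) hx
  | succ n ih =>
    rw [Function.iterate_succ_apply', star_shift_mul_mul_shift hφ (hu.commutesWithP.shift_iter n)]
    conv_rhs => rw [eq_sum_S_mul_mul_star_S hφ x]
    exact Finset.sum_congr rfl fun e _ => Finset.sum_congr rfl fun f _ => by rw [ih (hx e f)]

theorem conj_ukProd_succ (u y : A) (n : ℕ) :
    star (F.ukProd u (n + 1)) * y * F.ukProd u (n + 1) =
      star (F.shift^[n] u) * (star (F.ukProd u n) * y * F.ukProd u n) * F.shift^[n] u := by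
  rw [ukProd_succ, star_mul]
  simp only [mul_assoc]

theorem star_S_mul_conj_ukProd_succ_mul_S {u : A} (hu : F.CommutesWithP u) (m : ℕ) (y : A)
    (e f : G.E) :
    star (F.S e) * (star (F.ukProd u (m + 1)) * y * F.ukProd u (m + 1)) * F.S f =
      star (F.ukProd u m) * F.amap u e f y * F.ukProd u m := by
  calc _ = star (F.ukProd u (m + 1) * F.S e) * y * (F.ukProd u (m + 1) * F.S f) := by
        rw [star_mul]; simp only [mul_assoc]
    _ = _ := by
        rw [ukProd_succ_mul_S hu, ukProd_succ_mul_S hu, amap]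
        simp only [star_mul, mul_assoc]

theorem diagonalAtDepth_conj_ukProd {u : A} (hu : F.CommutesWithP u) {m : ℕ} {y : A}
    (h : ∀ L : List (G.E × G.E), L.length = m → F.acomp u L y ∈ F.DEk 0) :
    F.DiagonalAtDepth m (star (F.ukProd u m) * y * F.ukProd u m) := by
  induction m generalizing y with
  | zero => simpa [DiagonalAtDepth, acomp] using h [] rfl
  | succ m ih =>
    intro e f
    rw [star_S_mul_conj_ukProd_succ_mul_S hu]
    exact ih fun L hL => by
      simpa [acomp_append, acomp] using h (L ++ [(e, f)]) (by simp [hL])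

/-! ### The equivalences -/

theorem iInf_Xi_le_DEk_zero_of_inverse (hns : G.NoSinks) {u w : A} {k l : ℕ}
    {lam lamw : A →⋆ₐ[ℂ] A} (hlam : F.IsLambdaU u lam) (hw : F.IsUE w) (hwl : w ∈ F.FEk l)
    (hlamw : F.IsLambdaU w lamw) (hleft : ∀ x, lam (lamw x) = x)
    (hright : ∀ x, lamw (lam x) = x) : (⨅ r, F.Xi u k r) ≤ F.DEk 0 := by
  have hS : ∀ e, lamw (u * F.S e) = F.S e := fun e => by rw [← hlam.1, hright]
  have hXi : ∀ r, F.Xi u k r ≤ (F.FEk (l + k - r)).comap lamw.toAlgHom.toLinearMap := by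
    intro r
    induction r with
    | zero =>
      intro x hx
      have hwk := ukProd_succ_mem_FEk hns hwl k
      rw [Submodule.mem_comap, AlgHom.toLinearMap_apply, StarAlgHom.coe_toAlgHom,
        hlamw.apply_of_mem_FEk hw.commutesWithP (FEk_mono hns (show k - 1 ≤ k + 1 by omega) hx)]
      exact mul_mem_FEk (mul_mem_FEk hwk (FEk_mono hns (show k - 1 ≤ l + k by omega) hx))
        (star_mem_FEk hwk)
    | succ r ih =>
      refine Submodule.span_le.mpr ?_
      rintro _ ⟨x, hx, e, f, rfl⟩
      rw [SetLike.mem_coe, Submodule.mem_comap, AlgHom.toLinearMap_apply,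
        StarAlgHom.coe_toAlgHom, map_mul, map_mul, map_star, hS, hS, ← Nat.sub_sub]
      exact star_S_mul_mul_S_mem_FEk_pred hns (ih hx) e f
  intro x hx
  have hd : lamw x ∈ F.DEk 0 :=
    FEk_zero_le_DEk_zero (by simpa using hXi (l + k) (Submodule.mem_iInf _ |>.mp hx (l + k)))
  rw [← hleft x, hlam.apply_of_mem_DEk_zero hd]
  exact hd

theorem exists_acomp_mem_DEk_zero_of_iInf_Xi_le (hns : G.NoSinks) {u : A} {k : ℕ}
    (huk : u ∈ F.FEk k) (h : (⨅ r, F.Xi u k r) ≤ F.DEk 0) :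
    ∃ l : ℕ, 1 ≤ l ∧ ∀ L : List (G.E × G.E), L.length = l →
      ∀ x ∈ F.FEk (k - 1), F.acomp u L x ∈ F.DEk 0 := by
  obtain ⟨r, hr⟩ := Xi_stabilizes hns huk
  have hXi : F.Xi u k r ≤ F.DEk 0 := by
    refine le_trans (le_iInf fun s => ?_) h
    rcases le_total s r with hsr | hrs
    · exact Xi_antitone hns huk hsr
    · rw [hr s hrs]
  refine ⟨r + 1, by omega, fun L hL x hx => hXi ?_⟩
  rw [← hr (r + 1) (by omega), ← hL]
  exact acomp_mem_Xi hx L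

theorem conj_ukProd_stabilizes_of_acomp_mem_DEk_zero (hφ : F.shift 1 = 1) (hns : G.NoSinks)
    {u : A} (hu : F.IsUE u) {k : ℕ} (huk : u ∈ F.FEk k)
    (h : ∃ l : ℕ, 1 ≤ l ∧ ∀ L : List (G.E × G.E), L.length = l →
      ∀ x ∈ F.FEk (k - 1), F.acomp u L x ∈ F.DEk 0) :
    ∃ N : ℕ, 1 ≤ N ∧ ∀ m : ℕ, N ≤ m →
      star (F.ukProd u m) * star u * F.ukProd u m
        = star (F.ukProd u N) * star u * F.ukProd u N := by
  obtain ⟨l, -, hl⟩ := h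
  have hlong : ∀ m, l ≤ m → ∀ L : List (G.E × G.E), L.length = m →
      ∀ x ∈ F.FEk (k - 1), F.acomp u L x ∈ F.DEk 0 := by
    intro m hm L hL x hx
    rw [← List.take_append_drop (m - l) L, acomp_append]
    exact acomp_mem_DEk_zero hu (hl _ (by simp [hL]; omega) x hx) _
  -- `S_e* Ad(u_(m+1)*)(u*) S_f = Ad(u_m*)(S_e* u* S_f)` with `S_e* u* S_f ∈ F_E^(k-1)`.
  have hdiag : ∀ m, l ≤ m → F.DiagonalAtDepth (m + 1)
      (star (F.ukProd u (m + 1)) * star u * F.ukProd u (m + 1)) := fun m hm e f => by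
    rw [star_S_mul_conj_ukProd_succ_mul_S hu.commutesWithP]
    refine diagonalAtDepth_conj_ukProd hu.commutesWithP fun L hL => hlong m hm L hL _ ?_
    rw [amap, mul_assoc (star u), Unitary.star_mul_self_of_mem hu.1, mul_one]
    exact star_S_mul_mul_S_mem_FEk_pred hns (star_mem_FEk huk) e f
  refine ⟨l + 1, by omega, fun m hm => ?_⟩
  induction m, hm using Nat.le_induction with
  | base => rfl
  | succ m hm ih =>
    obtain ⟨m, rfl⟩ : ∃ n, m = n + 1 := ⟨m - 1, by omega⟩
    rw [conj_ukProd_succ, (hdiag m (by omega)).star_shift_iter_mul_mul hφ hu, ih]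

end CKFamily

namespace IsGraphCStarAlgebra

variable {A : Type} [CStarAlgebra A] [PartialOrder A] [StarOrderedRing A] {F : CKFamily G A}

theorem exists_isLambdaU (hGA : IsGraphCStarAlgebra G A F) {u : A}
    (hu : F.IsUE u) : ∃ lam : A →⋆ₐ[ℂ] A, F.IsLambdaU u lam := by
  obtain ⟨lam, hlam, -⟩ := hGA.universal A (F.twist hu) hGA.sum_one
  exact ⟨lam, hlam.2, hlam.1⟩

theorem map_eq_self (hGA : IsGraphCStarAlgebra G A F) (ψ : A →⋆ₐ[ℂ] A)
    (hP : ∀ v, ψ (F.P v) = F.P v) (hS : ∀ e, ψ (F.S e) = F.S e) (x : A) : ψ x = x := by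
  obtain ⟨_, -, huniq⟩ := hGA.universal A F hGA.sum_one
  exact DFunLike.congr_fun ((huniq ψ ⟨hP, hS⟩).trans
    (huniq (StarAlgHom.id ℂ A) ⟨fun _ => rfl, fun _ => rfl⟩).symm) x

theorem rightInverse_of_leftInverse (hGA : IsGraphCStarAlgebra G A F) (hns : G.NoSinks)
    {u w : A} {k l : ℕ} (hu : F.IsUE u) (huk : u ∈ F.FEk k) (hw : F.IsUE w) (hwl : w ∈ F.FEk l)
    {lam lamw : A →⋆ₐ[ℂ] A} (hlam : F.IsLambdaU u lam) (hlamw : F.IsLambdaU w lamw)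
    (hleft : ∀ x, lam (lamw x) = x) (x : A) : lamw (lam x) = x := by
  have hφ := F.shift_one_of_noSinks hGA.sum_one hns
  have hz := hlamw.comp hlam
  set z := lamw u * w with hz_def
  set W := F.ukProd w (k + 1)
  have hWF : W ∈ F.FEk (l + k) := F.ukProd_succ_mem_FEk hns hwl k
  have hzW : z = W * u * star W * w := by
    rw [hz_def, hlamw.apply_of_mem_FEk hw.commutesWithP (F.FEk_mono hns (show k ≤ k + 1 by omega) huk)]
  have hzU : F.IsUE z := by
    rw [hzW]
    exact (((hw.ukProd hφ _).mul hu).mul (hw.ukProd hφ _).star).mul hw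
  have hzF : z ∈ F.FEk (l + k) := by
    rw [hzW]
    exact F.mul_mem_FEk (F.mul_mem_FEk (F.mul_mem_FEk hWF
      (F.FEk_mono hns (show k ≤ l + k by omega) huk)) (F.star_mem_FEk hWF))
      (F.FEk_mono hns (show l ≤ l + k by omega) hwl)
  have hlz : lam z * u = u := F.eq_of_forall_mul_S_eq hφ fun e => by
    have h := hleft (lam (F.S e))
    rw [← StarAlgHom.comp_apply lamw lam, hz.1, map_mul, hlam.1] at h
    rw [mul_assoc, h]
  have hlz1 : lam z = 1 := by
    rw [← mul_one (lam z), ← Unitary.mul_star_self_of_mem hu.1, ← mul_assoc, hlz,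
      Unitary.mul_star_self_of_mem hu.1]
  have hz1 : z = 1 :=
    hz.eq_one_of_apply_eq_one hφ hzU hzF (by rw [StarAlgHom.comp_apply, hlz1, map_one])
  exact hGA.map_eq_self (lamw.comp lam) hz.2 (fun e => by rw [hz.1, hz1, one_mul]) x

theorem exists_inverse_of_conj_ukProd_stabilizes (hGA : IsGraphCStarAlgebra G A F)
    (hns : G.NoSinks) {u : A} (hu : F.IsUE u) {k : ℕ} (huk : u ∈ F.FEk k)
    (h : ∃ N : ℕ, 1 ≤ N ∧ ∀ m : ℕ, N ≤ m →
      star (F.ukProd u m) * star u * F.ukProd u m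
        = star (F.ukProd u N) * star u * F.ukProd u N) :
    ∃ (lam lamw : A →⋆ₐ[ℂ] A) (w : A) (l : ℕ), F.IsLambdaU u lam ∧
      F.IsUE w ∧ 1 ≤ l ∧ w ∈ F.FEk l ∧ F.IsLambdaU w lamw ∧
      (∀ x, lam (lamw x) = x) ∧ (∀ x, lamw (lam x) = x) := by
  obtain ⟨N, hN, hconst⟩ := h
  obtain ⟨N, rfl⟩ : ∃ n, N = n + 1 := ⟨N - 1, by omega⟩
  have hφ := F.shift_one_of_noSinks hGA.sum_one hns
  set M := k + N + 1
  set w := star (F.ukProd u (N + 1)) * star u * F.ukProd u (N + 1)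
  have hw : F.IsUE w := ((hu.ukProd hφ _).star.mul hu.star).mul (hu.ukProd hφ _)
  have hwF : w ∈ F.FEk M := by
    have h1 := F.FEk_mono hns (show k + N ≤ M by omega) (F.ukProd_succ_mem_FEk hns huk N)
    exact F.mul_mem_FEk (F.mul_mem_FEk (F.star_mem_FEk h1)
      (F.star_mem_FEk (F.FEk_mono hns (show k ≤ M by omega) huk))) h1
  obtain ⟨lam, hlam⟩ := hGA.exists_isLambdaU hu
  obtain ⟨lamw, hlamw⟩ := hGA.exists_isLambdaU hw
  have hlw : lam w = star u := by
    have hU := Unitary.mul_star_self_of_mem (hu.ukProd hφ M).1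
    rw [hlam.apply_of_mem_FEk hu.commutesWithP hwF, ← hconst M (by omega)]
    simp only [mul_assoc, hU, mul_one]
    rw [← mul_assoc, hU, one_mul]
  have hleft : ∀ x, lam (lamw x) = x := hGA.map_eq_self (lam.comp lamw)
    (fun v => by rw [StarAlgHom.comp_apply, hlamw.2, hlam.2])
    (fun e => by
      rw [StarAlgHom.comp_apply, hlamw.1, map_mul, hlw, hlam.1, ← mul_assoc,
        Unitary.star_mul_self_of_mem hu.1, one_mul])
  exact ⟨lam, lamw, w, M, hlam, hw, by omega, hwF, hlamw, hleft,
    hGA.rightInverse_of_leftInverse hns hu huk hw hwF hlam hlamw hleft⟩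

end IsGraphCStarAlgebra

end FinDirGraph

open FinDirGraph in
theorem stmt_14_general (G : FinDirGraph) (hns : G.NoSinks)
    (A : Type) [CStarAlgebra A] [PartialOrder A] [StarOrderedRing A]
    (F : CKFamily G A) (hGA : IsGraphCStarAlgebra G A F)
    (k : ℕ) (u : A) (hu : F.IsUE u) (huk : u ∈ F.FEk k) :
    List.TFAE [
      -- (1) λ_u is invertible with localized inverse
      ∃ (lam lamw : A →⋆ₐ[ℂ] A) (w : A) (l : ℕ), F.IsLambdaU u lam ∧
        F.IsUE w ∧ 1 ≤ l ∧ w ∈ F.FEk l ∧ F.IsLambdaU w lamw ∧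
        (∀ x, lam (lamw x) = x) ∧ (∀ x, lamw (lam x) = x),
      -- (2) the sequence Ad(u_m*)(u*) eventually stabilizes
      ∃ N : ℕ, 1 ≤ N ∧ ∀ m : ℕ, N ≤ m →
        star (F.ukProd u m) * star u * F.ukProd u m
          = star (F.ukProd u N) * star u * F.ukProd u N,
      -- (3) the ring A_u is nilpotent
      ∃ l : ℕ, 1 ≤ l ∧ ∀ L : List (G.E × G.E), L.length = l →
        ∀ x ∈ F.FEk (k - 1), F.acomp u L x ∈ F.DEk 0,
      -- (4) Ξ_u ⊆ D_E^0
      (⨅ r : ℕ, F.Xi u k r) ≤ F.DEk 0 ] := by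
  tfae_have 1 → 4 := fun ⟨_, _, _, _, hlam, hw, _, hwl, hlamw, hleft, hright⟩ =>
    F.iInf_Xi_le_DEk_zero_of_inverse hns hlam hw hwl hlamw hleft hright
  tfae_have 4 → 3 := F.exists_acomp_mem_DEk_zero_of_iInf_Xi_le hns huk
  tfae_have 3 → 2 :=
    F.conj_ukProd_stabilizes_of_acomp_mem_DEk_zero (F.shift_one_of_noSinks hGA.sum_one hns) hns
      hu huk
  tfae_have 2 → 1 := hGA.exists_inverse_of_conj_ukProd_stabilizes hns hu huk
  tfae_finish

open FinDirGraph in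
/-- Theorem 5.1 (main). -/
theorem stmt_14 (G : FinDirGraph) (hns : G.NoSinks)
    (A : Type) [CStarAlgebra A] [PartialOrder A] [StarOrderedRing A]
    (F : CKFamily G A) (hGA : IsGraphCStarAlgebra G A F)
    (k : ℕ) (hk : 1 ≤ k) (u : A) (hu : F.IsUE u) (huk : u ∈ F.FEk k) :
    List.TFAE [
      -- (1) λ_u is invertible with localized inverse
      ∃ (lam lamw : A →⋆ₐ[ℂ] A) (w : A) (l : ℕ), F.IsLambdaU u lam ∧
        F.IsUE w ∧ 1 ≤ l ∧ w ∈ F.FEk l ∧ F.IsLambdaU w lamw ∧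
        (∀ x, lam (lamw x) = x) ∧ (∀ x, lamw (lam x) = x),
      -- (2) the sequence Ad(u_m*)(u*) eventually stabilizes
      ∃ N : ℕ, 1 ≤ N ∧ ∀ m : ℕ, N ≤ m →
        star (F.ukProd u m) * star u * F.ukProd u m
          = star (F.ukProd u N) * star u * F.ukProd u N,
      -- (3) the ring A_u is nilpotent
      ∃ l : ℕ, 1 ≤ l ∧ ∀ L : List (G.E × G.E), L.length = l →
        ∀ x ∈ F.FEk (k - 1), F.acomp u L x ∈ F.DEk 0,
      -- (4) Ξ_u ⊆ D_E^0
      (⨅ r : ℕ, F.Xi u k r) ≤ F.DEk 0 ] :=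
  stmt_14_general G hns A F hGA k u hu huk
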